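/- For a pre-Hilbert space E: if E is complete then IC(E) = 0, and if E is not complete then IC(E) is an infinite cardinal, where IC(E) = min{dim(Ē ⊖ V) : V a complete subspace of E} and Ē is the completion of E. -/

import Mathlib

/-- The Hilbert dimension of an inner product space: the supremum of cardinalities of
orthonormal subsets. -/
noncomputable def hdim (𝕜 E : Type*) [RCLike 𝕜] [NormedAddCommGroup E]
    [InnerProductSpace 𝕜 E] : Cardinal :=
  ⨆ s : {s : Set E // Orthonormal 𝕜 (fun x : s => (x : E))}, Cardinal.mk s.1

/-!
If `E` is complete it is closed and dense, hence everything, and `V = E` has zero orthogonal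
complement. Otherwise let `V ≤ E` be complete. Since `V ⊆ E`, the projection onto `Vᗮ` maps
the dense subspace `E` into `E ∩ Vᗮ`, so `E ∩ Vᗮ` is dense in `Vᗮ`. Were `Vᗮ` finite-dimensional,
`E ∩ Vᗮ` would be closed, so `Vᗮ ≤ E` and `E ⊇ V ⊔ Vᗮ = Ē` would be complete. Hence `Vᗮ` is
infinite-dimensional, and a Hilbert basis of it is an infinite orthonormal set.
-/

section HilbertDimension

variable {𝕜 H : Type*} [RCLike 𝕜] [NormedAddCommGroup H] [InnerProductSpace 𝕜 H]

theorem hdim_eq_zero_of_subsingleton [Subsingleton H] : hdim 𝕜 H = 0 := by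
  refine le_antisymm (ciSup_le' fun s => ?_) zero_le
  have : IsEmpty s.1 := ⟨fun e => s.2.ne_zero e (Subsingleton.eq_zero (e : H))⟩
  exact (Cardinal.mk_eq_zero s.1).le

theorem mk_le_hdim {s : Set H} (hs : Orthonormal 𝕜 (fun x : s => (x : H))) :
    Cardinal.mk s ≤ hdim 𝕜 H :=
  le_ciSup (f := fun s : {s : Set H // Orthonormal 𝕜 (fun x : s => (x : H))} => Cardinal.mk s.1)
    Cardinal.bddAbove_of_small ⟨s, hs⟩

theorem aleph0_le_hdim_of_not_finiteDimensional [CompleteSpace H]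
    (h : ¬ FiniteDimensional 𝕜 H) : Cardinal.aleph0 ≤ hdim 𝕜 H := by
  obtain ⟨w, b, hb⟩ := exists_hilbertBasis 𝕜 H
  have hw : w.Infinite := fun hfin => by
    have := hfin.fintype
    exact h b.toOrthonormalBasis.toBasis.finiteDimensional_of_finite
  have := hw.to_subtype
  exact (Cardinal.aleph0_le_mk w).trans (mk_le_hdim (hb ▸ b.orthonormal))

end HilbertDimension

namespace Submodule

variable {𝕜 F : Type*} [RCLike 𝕜] [NormedAddCommGroup F] [InnerProductSpace 𝕜 F]
  {E V : Submodule 𝕜 F}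

theorem orthogonal_le_topologicalClosure_inf_orthogonal [V.HasOrthogonalProjection]
    (hE : Dense (E : Set F)) (hVE : V ≤ E) : Vᗮ ≤ (E ⊓ Vᗮ).topologicalClosure := by
  intro y hy
  have hmaps : ∀ x ∈ (E : Set F), Vᗮ.starProjection x ∈ ((E ⊓ Vᗮ : Submodule 𝕜 F) : Set F) :=
    fun x hx => ⟨by simpa using E.sub_mem hx (hVE (V.starProjection_apply_mem x)),
      Vᗮ.starProjection_apply_mem x⟩
  rw [← (starProjection_eq_self_iff (K := Vᗮ)).2 hy]
  exact map_mem_closure Vᗮ.starProjection.continuous (hE y) hmaps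

theorem eq_top_of_dense_of_finiteDimensional_orthogonal [V.HasOrthogonalProjection]
    [FiniteDimensional 𝕜 Vᗮ] (hE : Dense (E : Set F)) (hVE : V ≤ E) : E = ⊤ := by
  have hclosed : IsClosed ((E ⊓ Vᗮ : Submodule 𝕜 F) : Set F) :=
    (E ⊓ Vᗮ).closed_of_finiteDimensional
  have hVperp : Vᗮ ≤ E := by
    have := orthogonal_le_topologicalClosure_inf_orthogonal hE hVE
    rw [hclosed.submodule_topologicalClosure_eq] at this
    exact this.trans inf_le_left
  rw [eq_top_iff, ← sup_orthogonal_of_hasOrthogonalProjection (K := V)]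
  exact sup_le hVE hVperp

end Submodule

theorem IC_eq_zero_iff_complete
    {F : Type u} [NormedAddCommGroup F] [InnerProductSpace ℂ F] [CompleteSpace F]
    (E : Submodule ℂ F) (hdense : Dense (E : Set F)) :
    (IsComplete (E : Set F) →
      (⨅ V : {V : Submodule ℂ F // V ≤ E ∧ IsComplete (V : Set F)},
        hdim ℂ ↥((V : Submodule ℂ F)ᗮ)) = 0) ∧
    (¬ IsComplete (E : Set F) →
      Cardinal.aleph0 ≤
        ⨅ V : {V : Submodule ℂ F // V ≤ E ∧ IsComplete (V : Set F)},
          hdim ℂ ↥((V : Submodule ℂ F)ᗮ)) := by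
  constructor
  · intro hE
    have hEtop : E = ⊤ := Submodule.dense_iff_topologicalClosure_eq_top.1 hdense ▸
      hE.isClosed.submodule_topologicalClosure_eq.symm
    have : Subsingleton ↥(Eᗮ) := by
      rw [hEtop, Submodule.top_orthogonal_eq_bot]
      infer_instance
    exact le_antisymm ((ciInf_le (OrderBot.bddBelow _) ⟨E, le_rfl, hE⟩).trans
      hdim_eq_zero_of_subsingleton.le) zero_le
  · intro hE
    have : Nonempty {V : Submodule ℂ F // V ≤ E ∧ IsComplete (V : Set F)} :=
      ⟨⟨⊥, bot_le, by simpa using isClosed_singleton.isComplete⟩⟩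
    refine le_ciInf fun ⟨V, hVE, hVc⟩ => ?_
    have : CompleteSpace V := hVc.completeSpace_coe
    refine aleph0_le_hdim_of_not_finiteDimensional fun _ => hE ?_
    rw [Submodule.eq_top_of_dense_of_finiteDimensional_orthogonal hdense hVE, Submodule.top_coe]
    exact isComplete_univ
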